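/- Let T^1 = KR_right(S,A)^1 for a finite semigroup S generated by a finite alphabet A, and let D be the Lyndon–Chiswell length function on T^1. For all α, β, γ ∈ T^1, D(γα, γβ) ≥ D(α, β). -/

import Mathlib

open scoped Classical

namespace KRHolonomy

/-- Green's quasi-order `≤_J` on a monoid: `a ≤_J b` iff `a ∈ M b M`. -/
def leJ {M : Type*} [Monoid M] (a b : M) : Prop := ∃ x y : M, a = x * b * y

/-- `a <_J b` iff `a ≤_J b` and not `b ≤_J a`. -/
def ltJ {M : Type*} [Monoid M] (a b : M) : Prop := leJ a b ∧ ¬ leJ b a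

/-- Green's quasi-order `≤_R` on a monoid: `a ≤_R b` iff `a ∈ b M`. -/
def leR {M : Type*} [Monoid M] (a b : M) : Prop := ∃ x : M, a = b * x

/-- `a <_R b` iff `a ≤_R b` and not `b ≤_R a`. -/
def ltR {M : Type*} [Monoid M] (a b : M) : Prop := leR a b ∧ ¬ leR b a

/-- Green's quasi-order `≤_L` on a monoid: `a ≤_L b` iff `a ∈ M b`. -/
def leL {M : Type*} [Monoid M] (a b : M) : Prop := ∃ x : M, a = x * b

/-- `a <_L b` iff `a ≤_L b` and not `b ≤_L a`. -/
def ltL {M : Type*} [Monoid M] (a b : M) : Prop := leL a b ∧ ¬ leL b a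

/-- The Dedekind height function: `height x` is the largest `k` such that there is a chain
`x₀ >_J x₁ >_J ⋯ >_J x_k = x`. -/
noncomputable def height {M : Type*} [Monoid M] (x : M) : ℕ :=
  sSup {k | ∃ c : ℕ → M, c k = x ∧ ∀ i < k, ltJ (c (i + 1)) (c i)}

variable {A S : Type*} [Semigroup S]

/-- The edge `(s, a, s·θ(a))` of the right Cayley graph of `(S,A)` is a transition edge:
there is no path in the right Cayley graph from `s·θ(a)` back to `s`. -/
def IsTransitionEdge (θ : FreeMonoid A →* WithOne S) (s : WithOne S) (a : A) : Prop :=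
  ¬ ∃ w : FreeMonoid A, s * θ (FreeMonoid.of a) * θ w = s

/-- The (ordered) sequence of transition edges along the path of the right Cayley graph
starting at `s` and reading the word `u`; an edge is recorded as a pair (source, label). -/
noncomputable def transEdgesFrom (θ : FreeMonoid A →* WithOne S) :
    WithOne S → List A → List (WithOne S × A)
  | _, [] => []
  | s, a :: w =>
      (if IsTransitionEdge θ s a then [(s, a)] else []) ++
        transEdgesFrom θ (s * θ (FreeMonoid.of a)) w

/-- The sequence of transition edges of the path starting at `1` reading `u`. -/
noncomputable def transEdges (θ : FreeMonoid A →* WithOne S) (u : FreeMonoid A) :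
    List (WithOne S × A) :=
  transEdgesFrom θ 1 (FreeMonoid.toList u)

/-- The congruence (`τ_r`, together with `(1,1)`) defining the right Karnofsky–Rhodes
expansion: two words of `A^*` represent the same element of `KR_right(S,A)¹` iff they are
both empty or both nonempty, they have the same image in `S¹` and the same sequence of
transition edges. -/
def KRrel (θ : FreeMonoid A →* WithOne S) (u v : FreeMonoid A) : Prop :=
  (u = 1 ∧ v = 1) ∨
    (u ≠ 1 ∧ v ≠ 1 ∧ θ u = θ v ∧ transEdges θ u = transEdges θ v)

/-- Green's quasi-order `≤_J` on `T¹ = KR_right(S,A)¹`, expressed on word representatives: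
`u ≤_J v` iff `u = p v q` holds in `T¹` for some `p, q ∈ T¹`. -/
def leJT (θ : FreeMonoid A →* WithOne S) (u v : FreeMonoid A) : Prop :=
  ∃ p q : FreeMonoid A, KRrel θ u (p * v * q)

/-- `<_J` on `T¹ = KR_right(S,A)¹`, expressed on word representatives. -/
def ltJT (θ : FreeMonoid A →* WithOne S) (u v : FreeMonoid A) : Prop :=
  leJT θ u v ∧ ¬ leJT θ v u

/-- The Dedekind height function on `T¹ = KR_right(S,A)¹`, expressed on word
representatives: the largest `k` such that there is a chain
`t₀ >_J t₁ >_J ⋯ >_J t_k = t` in `T¹`. -/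
noncomputable def heightT (θ : FreeMonoid A →* WithOne S) (u : FreeMonoid A) : ℕ :=
  sSup {k | ∃ c : ℕ → FreeMonoid A, KRrel θ (c k) u ∧ ∀ i < k, ltJT θ (c (i + 1)) (c i)}

/-- `ℓ = 2 · max { h(s) : s ∈ S¹ }`. -/
noncomputable def ell (S : Type*) [Semigroup S] : ℕ :=
  2 * sSup (Set.range fun s : WithOne S => height s)

/-- `ξ(u,v)`: the largest `i` (with `0 ≤ i ≤ m`, `m` the number of transition edges of `u`)
such that the first `i` transition edges of `u` and of `v` agree. -/
noncomputable def xi (θ : FreeMonoid A →* WithOne S) (u v : FreeMonoid A) : ℕ :=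
  sSup {i | i ≤ (transEdges θ u).length ∧
    (transEdges θ u).take i = (transEdges θ v).take i}

/-- The endpoint of an edge `(s, a)` of the right Cayley graph, namely `s·θ(a)`. -/
def edgeEnd (θ : FreeMonoid A →* WithOne S) (e : WithOne S × A) : WithOne S :=
  e.1 * θ (FreeMonoid.of e.2)

/-- The Lyndon–Chiswell length function `D` on `T¹ = KR_right(S,A)¹`, expressed on word
representatives.  With `k = ξ(u,v)` (and indexing the transition edges from `1` as in the
paper, so that `E_k` sits at list index `k-1`):
`D(u,v) = ℓ` if `u = v` in `T¹`; `D(u,v) = 0` if `u ≠ v` in `T¹` and `k = 0`;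
`D(u,v) = 2·h(end(E_k))` if `k > 0`, `E_{k+1}` and `E'_{k+1}` both exist and have the same
endpoint; and `D(u,v) = 2·h(end(E_k)) - 1` in all remaining cases. -/
noncomputable def lcD (θ : FreeMonoid A →* WithOne S) (u v : FreeMonoid A) : ℕ :=
  if KRrel θ u v then ell S
  else if xi θ u v = 0 then 0
  else
    let k := xi θ u v
    let base := (transEdges θ u)[k - 1]?.elim 0 fun e => height (edgeEnd θ e)
    if ∃ e e', (transEdges θ u)[k]? = some e ∧ (transEdges θ v)[k]? = some e' ∧
        edgeEnd θ e = edgeEnd θ e'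
    then 2 * base
    else 2 * base - 1

/-- The relation `∼` on `C = {(k,α) : 0 ≤ k ≤ ℓ, α ∈ T¹}`:
`(k,α) ∼ (k',β)` iff `k = k'` and `D(α,β) ≥ k`. -/
def simRel (θ : FreeMonoid A →* WithOne S)
    (p q : {p : ℕ × FreeMonoid A // p.1 ≤ ell S}) : Prop :=
  p.val.1 = q.val.1 ∧ lcD θ p.val.2 q.val.2 ≥ p.val.1

/-- The vertex set of the Chiswell tree: `∼`-classes `[k,α]`. -/
def CVert (θ : FreeMonoid A →* WithOne S) : Type _ := Quot (simRel θ)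

/-- The edge relation of the Chiswell graph: the edges are `[k,α] — [k+1,α]`
for `0 ≤ k < ℓ` and `α ∈ T¹`. -/
def edgeRel (θ : FreeMonoid A →* WithOne S) (v w : CVert θ) : Prop :=
  ∃ (k : ℕ) (α : FreeMonoid A) (hk : k + 1 ≤ ell S),
    v = Quot.mk (simRel θ) ⟨(k, α), Nat.le_of_succ_le hk⟩ ∧
    w = Quot.mk (simRel θ) ⟨(k + 1, α), hk⟩

/-- The Chiswell graph `𝒞`. -/
def CGraph (θ : FreeMonoid A →* WithOne S) : SimpleGraph (CVert θ) :=
  SimpleGraph.fromRel (edgeRel θ)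

/-- The depth function of the Chiswell tree: `δ([k,α]) = k`. -/
def depth (θ : FreeMonoid A →* WithOne S) : CVert θ → ℕ :=
  Quot.lift (fun p => p.val.1) (fun _ _ h => h.1)

/-!
Left multiplication by `γ` turns the transition-edge sequence of `α` into that of `γ` followed by
the translates `θ(γ)·E` of those edges `E` of `α` that are still transition edges after
translation. Hence the common prefix of the sequences of `γα` and `γβ` contains the translate of
the common prefix `E₁ ⋯ E_k` of those of `α` and `β`, and its last edge `E''` ends `R`-below
`θ(γ)·end(E_k)`; as the height is antitone for `≤_J`, `h(end E'') ≥ h(end E_k)`.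

If moreover `E_{k+1}` and `E'_{k+1}` end at the same point, then either both survive translation
right after the common prefix, where they still meet, or `E''` ends `R`-below
`θ(γ)·end(E_{k+1})`. In the latter case `h(end E'') > h(end E_k)`, because by stability of finite
monoids a transition edge descends strictly in the `J`-order; this absorbs the `-1` in `D`.
-/

section Green

variable {M : Type*} [Monoid M]

lemma leJ_refl (a : M) : leJ a a := ⟨1, 1, by simp⟩

lemma leJ_trans {a b c : M} (hab : leJ a b) (hbc : leJ b c) : leJ a c := by
  obtain ⟨x, y, rfl⟩ := hab
  obtain ⟨x', y', rfl⟩ := hbc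
  exact ⟨x * x', y' * y, by simp only [mul_assoc]⟩

lemma ltJ_of_ltJ_of_leJ {a b c : M} (hab : ltJ a b) (hbc : leJ b c) : ltJ a c :=
  ⟨leJ_trans hab.1 hbc, fun hca => hab.2 (leJ_trans hbc hca)⟩

lemma ltJ_of_leJ_of_ltJ {a b c : M} (hab : leJ a b) (hbc : ltJ b c) : ltJ a c :=
  ⟨leJ_trans hab hbc.1, fun hca => hbc.2 (leJ_trans hca hab)⟩

lemma leJ_mul_left (a b : M) : leJ (a * b) b := ⟨a, 1, by rw [mul_one]⟩

lemma leR_trans {a b c : M} (hab : leR a b) (hbc : leR b c) : leR a c := by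
  obtain ⟨x, rfl⟩ := hab
  obtain ⟨y, rfl⟩ := hbc
  exact ⟨y * x, mul_assoc _ _ _⟩

lemma leR_mul_right (a b : M) : leR (a * b) a := ⟨b, rfl⟩

lemma leR.leJ {a b : M} (h : leR a b) : leJ a b := by
  obtain ⟨x, rfl⟩ := h
  exact ⟨1, x, by rw [one_mul]⟩

/-- Stability of finite monoids: from `s = x * s * (t * y)` we get `s = s * (t * y) ^ (j - i)`
whenever `(t * y) ^ i = (t * y) ^ j` with `i < j`. -/
lemma leR_of_leJ_mul [Finite M] {s t : M} (h : leJ s (s * t)) : leR s (s * t) := by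
  obtain ⟨x, y, hs⟩ := h
  have hpow : ∀ n, s = x ^ n * s * (t * y) ^ n := by
    intro n
    induction n with
    | zero => simp
    | succ n ih =>
      calc s = x ^ n * (x * (s * t) * y) * (t * y) ^ n := by rw [← hs, ← ih]
        _ = x ^ (n + 1) * s * (t * y) ^ (n + 1) := by
          rw [pow_succ x, pow_succ' (t * y)]
          simp only [mul_assoc]
  obtain ⟨i, j, hij, hgij⟩ := Finite.exists_ne_map_eq_of_infinite fun n : ℕ => (t * y) ^ n
  wlog hlt : i < j generalizing i j
  · exact this j i hij.symm hgij.symm (by omega)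
  obtain ⟨d, rfl⟩ := Nat.exists_eq_add_of_lt hlt
  refine ⟨y * (t * y) ^ d, ?_⟩
  calc s = x ^ i * s * (t * y) ^ (i + (d + 1)) := by rw [← add_assoc, ← hgij, ← hpow]
    _ = s * t * (y * (t * y) ^ d) := by
      rw [pow_add, ← mul_assoc, ← hpow, pow_succ']
      simp only [mul_assoc]

def jChainLengths (x : M) : Set ℕ :=
  {k | ∃ c : ℕ → M, c k = x ∧ ∀ i < k, ltJ (c (i + 1)) (c i)}

lemma ltJ_of_chain {c : ℕ → M} {k : ℕ} (hc : ∀ i < k, ltJ (c (i + 1)) (c i)) {i j : ℕ}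
    (hij : i < j) (hjk : j ≤ k) : ltJ (c j) (c i) := by
  induction j, hij using Nat.le_induction with
  | base => exact hc i (by omega)
  | succ j hij ih => exact ltJ_of_ltJ_of_leJ (hc j (by omega)) (ih (by omega)).1

lemma le_natCard_of_mem_jChainLengths [Finite M] {x : M} {k : ℕ} (hk : k ∈ jChainLengths x) :
    k + 1 ≤ Nat.card M := by
  obtain ⟨c, -, hc⟩ := hk
  have hinj : Function.Injective fun i : Fin (k + 1) => c i :=
    Function.Injective.of_lt_imp_ne fun i j hij heq =>
      (ltJ_of_chain hc hij (by omega)).2 (heq ▸ leJ_refl _)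
  simpa using Nat.card_le_card_of_injective _ hinj

lemma bddAbove_jChainLengths [Finite M] (x : M) : BddAbove (jChainLengths x) :=
  ⟨Nat.card M, fun _ hk => by have := le_natCard_of_mem_jChainLengths hk; omega⟩

lemma zero_mem_jChainLengths (x : M) : 0 ∈ jChainLengths x := ⟨fun _ => x, rfl, by omega⟩

lemma height_mem_jChainLengths [Finite M] (x : M) : height x ∈ jChainLengths x :=
  Nat.sSup_mem ⟨0, zero_mem_jChainLengths x⟩ (bddAbove_jChainLengths x)

lemma le_height [Finite M] {x : M} {k : ℕ} (hk : k ∈ jChainLengths x) : k ≤ height x :=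
  le_csSup (bddAbove_jChainLengths x) hk

lemma height_lt_natCard [Finite M] (x : M) : height x < Nat.card M :=
  le_natCard_of_mem_jChainLengths (height_mem_jChainLengths x)

lemma height_le_of_leJ [Finite M] {a b : M} (h : leJ a b) : height b ≤ height a := by
  obtain ⟨c, hcb, hc⟩ := height_mem_jChainLengths b
  refine le_height ⟨Function.update c (height b) a, by simp, fun i hi => ?_⟩
  simp only [Function.update_apply, if_neg (show i ≠ height b by omega)]
  split_ifs with hib
  · exact ltJ_of_leJ_of_ltJ h (by rw [← hcb, ← hib]; exact hc i hi)
  · exact hc i hi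

lemma height_lt_of_ltJ [Finite M] {a b : M} (h : ltJ a b) : height b < height a := by
  obtain ⟨c, hcb, hc⟩ := height_mem_jChainLengths b
  refine le_height ⟨Function.update c (height b + 1) a, by simp, fun i hi => ?_⟩
  simp only [Function.update_apply, if_neg (show i ≠ height b + 1 by omega)]
  split_ifs with hib
  · rwa [show i = height b by omega, hcb]
  · exact hc i (by omega)

end Green

instance instFiniteWithOne {X : Type*} [Finite X] : Finite (WithOne X) :=
  inferInstanceAs (Finite (Option X))

section CayleyPaths

variable (θ : FreeMonoid A →* WithOne S)

lemma transEdgesFrom_cons (s : WithOne S) (a : A) (l : List A) :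
    transEdgesFrom θ s (a :: l) =
      (if IsTransitionEdge θ s a then [(s, a)] else []) ++
        transEdgesFrom θ (s * θ (FreeMonoid.of a)) l := rfl

lemma transEdgesFrom_append (s : WithOne S) (l₁ l₂ : List A) :
    transEdgesFrom θ s (l₁ ++ l₂) =
      transEdgesFrom θ s l₁ ++ transEdgesFrom θ (s * θ (FreeMonoid.ofList l₁)) l₂ := by
  induction l₁ generalizing s with
  | nil => simp [transEdgesFrom]
  | cons a l ih => simp [transEdgesFrom_cons, ih, mul_assoc, FreeMonoid.ofList_cons]

lemma transEdges_mul_eq_append (u v : FreeMonoid A) :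
    transEdges θ (u * v) =
      transEdges θ u ++ transEdgesFrom θ (θ u) (FreeMonoid.toList v) := by
  simp [transEdges, transEdgesFrom_append]

lemma transEdges_mul_of (x : FreeMonoid A) (a : A) :
    transEdges θ (x * FreeMonoid.of a) =
      transEdges θ x ++ if IsTransitionEdge θ (θ x) a then [(θ x, a)] else [] := by
  simp [transEdges_mul_eq_append, transEdgesFrom]

lemma length_transEdges_mul_of (x : FreeMonoid A) (a : A) :
    (transEdges θ (x * FreeMonoid.of a)).length =
      (transEdges θ x).length + if IsTransitionEdge θ (θ x) a then 1 else 0 := by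
  rw [transEdges_mul_of]
  split_ifs <;> simp

lemma transEdges_one : transEdges θ 1 = [] := rfl

variable {θ}

lemma leR_mul_of_not_isTransitionEdge {s : WithOne S} {a : A}
    (h : ¬ IsTransitionEdge θ s a) : leR s (s * θ (FreeMonoid.of a)) := by
  obtain ⟨w, hw⟩ := not_not.mp h
  exact ⟨θ w, hw.symm⟩

lemma IsTransitionEdge.of_mul_left {t s : WithOne S} {a : A}
    (h : IsTransitionEdge θ (t * s) a) : IsTransitionEdge θ s a := fun ⟨w, hw⟩ =>
  h ⟨w, by rw [mul_assoc t, mul_assoc t, hw]⟩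

lemma mem_transEdgesFrom {s : WithOne S} {l : List A} {e : WithOne S × A}
    (he : e ∈ transEdgesFrom θ s l) : leR e.1 s ∧ IsTransitionEdge θ e.1 e.2 := by
  induction l generalizing s with
  | nil => simp [transEdgesFrom] at he
  | cons a l ih =>
    rw [transEdgesFrom_cons, List.mem_append] at he
    rcases he with he | he
    · split_ifs at he with ht
      · obtain rfl := List.mem_singleton.mp he
        exact ⟨⟨1, (mul_one s).symm⟩, ht⟩
      · simp at he
    · exact ⟨leR_trans (ih he).1 (leR_mul_right _ _), (ih he).2⟩

lemma leR_edgeEnd_of_mem_transEdgesFrom {s : WithOne S} {l : List A} {e : WithOne S × A}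
    (he : e ∈ transEdgesFrom θ s l) :
    leR (s * θ (FreeMonoid.ofList l)) (edgeEnd θ e) := by
  induction l generalizing s with
  | nil => simp [transEdgesFrom] at he
  | cons a l ih =>
    rw [transEdgesFrom_cons, List.mem_append] at he
    rw [FreeMonoid.ofList_cons, map_mul, ← mul_assoc]
    rcases he with he | he
    · split_ifs at he
      · obtain rfl := List.mem_singleton.mp he
        exact leR_mul_right _ _
      · simp at he
    · exact ih he

lemma leR_of_transEdgesFrom_eq_nil {s : WithOne S} {l : List A}
    (h : transEdgesFrom θ s l = []) : leR s (s * θ (FreeMonoid.ofList l)) := by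
  induction l generalizing s with
  | nil => exact ⟨1, by simp⟩
  | cons a l ih =>
    rw [transEdgesFrom_cons, List.append_eq_nil_iff] at h
    have ha : ¬ IsTransitionEdge θ s a := fun ha => by simp [ha] at h
    rw [FreeMonoid.ofList_cons, map_mul, ← mul_assoc]
    exact leR_trans (leR_mul_of_not_isTransitionEdge ha) (ih h.2)

lemma leR_edgeEnd_of_getLast? {s : WithOne S} {l : List A} {e : WithOne S × A}
    (he : (transEdgesFrom θ s l).getLast? = some e) :
    leR (edgeEnd θ e) (s * θ (FreeMonoid.ofList l)) := by
  induction l generalizing s with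
  | nil => simp [transEdgesFrom] at he
  | cons a l ih =>
    rw [transEdgesFrom_cons, List.getLast?_append] at he
    rw [FreeMonoid.ofList_cons, map_mul, ← mul_assoc]
    cases hl : (transEdgesFrom θ (s * θ (FreeMonoid.of a)) l).getLast? with
    | some e' => exact ih (by rw [← he, hl]; rfl)
    | none =>
      rw [hl, Option.none_or] at he
      split_ifs at he
      · obtain rfl : (s, a) = e := by simpa using he
        exact leR_of_transEdgesFrom_eq_nil (List.getLast?_eq_none_iff.mp hl)
      · simp at he

/-- The hypothesis on `i` says that `e` is read after the prefix `p`, or is the last transition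
edge read inside it. -/
lemma leR_edgeEnd_of_length_le {p y : FreeMonoid A} {i : ℕ} {e : WithOne S × A}
    (hi : (transEdges θ p).length ≤ i + 1) (he : (transEdges θ (p * y))[i]? = some e) :
    leR (edgeEnd θ e) (θ p) := by
  rw [transEdges_mul_eq_append] at he
  rcases lt_or_ge i (transEdges θ p).length with hlt | hge
  · rw [List.getElem?_append_left hlt, show i = (transEdges θ p).length - 1 by omega,
      ← List.getLast?_eq_getElem?] at he
    simpa using leR_edgeEnd_of_getLast? he
  · have hmem := mem_transEdgesFrom (List.mem_of_getElem? (List.getElem?_append_right hge ▸ he))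
    exact leR_trans (leR_mul_right _ _) hmem.1

lemma exists_eq_append_of_getElem?_transEdgesFrom {s : WithOne S} {l : List A} {i : ℕ}
    {e : WithOne S × A} (he : (transEdgesFrom θ s l)[i]? = some e) :
    ∃ l₁ l₂, l = l₁ ++ e.2 :: l₂ ∧ s * θ (FreeMonoid.ofList l₁) = e.1 ∧
      transEdgesFrom θ s l₁ = (transEdgesFrom θ s l).take i := by
  induction l generalizing s i with
  | nil => simp [transEdgesFrom] at he
  | cons a l ih =>
    rw [transEdgesFrom_cons] at he ⊢
    by_cases ht : IsTransitionEdge θ s a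
    · rw [if_pos ht, List.singleton_append] at he ⊢
      rcases i with _ | i
      · obtain rfl : (s, a) = e := by simpa using he
        exact ⟨[], l, rfl, by simp, by simp [transEdgesFrom]⟩
      · obtain ⟨l₁, l₂, rfl, hθ, hT⟩ := ih (by simpa using he)
        refine ⟨a :: l₁, l₂, rfl, ?_, ?_⟩
        · rw [FreeMonoid.ofList_cons, map_mul, ← mul_assoc, hθ]
        · rw [transEdgesFrom_cons, if_pos ht, hT]
          rfl
    · rw [if_neg ht, List.nil_append] at he ⊢
      obtain ⟨l₁, l₂, rfl, hθ, hT⟩ := ih he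
      refine ⟨a :: l₁, l₂, rfl, ?_, ?_⟩
      · rw [FreeMonoid.ofList_cons, map_mul, ← mul_assoc, hθ]
      · rw [transEdgesFrom_cons, if_neg ht, hT, List.nil_append]

lemma exists_eq_mul_of_getElem?_transEdges {u : FreeMonoid A} {i : ℕ} {e : WithOne S × A}
    (he : (transEdges θ u)[i]? = some e) :
    ∃ x y, u = x * FreeMonoid.of e.2 * y ∧ θ x = e.1 ∧
      transEdges θ x = (transEdges θ u).take i := by
  obtain ⟨l₁, l₂, hu, hθ, hT⟩ := exists_eq_append_of_getElem?_transEdgesFrom he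
  refine ⟨FreeMonoid.ofList l₁, FreeMonoid.ofList l₂, ?_, by simpa using hθ, hT⟩
  rw [← FreeMonoid.ofList_toList u, hu, FreeMonoid.ofList_append, FreeMonoid.ofList_cons]
  simp only [mul_assoc]

lemma exists_eq_mul_edgeEnd_of_getElem?_transEdges {u : FreeMonoid A} {i : ℕ}
    {e : WithOne S × A} (he : (transEdges θ u)[i]? = some e) :
    ∃ p y, u = p * y ∧ θ p = edgeEnd θ e ∧ transEdges θ p = (transEdges θ u).take (i + 1) := by
  obtain ⟨x, y, rfl, hθ, hT⟩ := exists_eq_mul_of_getElem?_transEdges he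
  have ht : IsTransitionEdge θ (θ x) e.2 :=
    hθ ▸ (mem_transEdgesFrom (List.mem_of_getElem? he)).2
  refine ⟨x * FreeMonoid.of e.2, y, rfl, by rw [map_mul, hθ]; rfl, ?_⟩
  rw [transEdges_mul_of, if_pos ht, List.take_add_one, he, hT, hθ]
  rfl

end CayleyPaths

section LeftTranslation

variable (θ : FreeMonoid A →* WithOne S)

noncomputable def shiftEdges (t : WithOne S) (l : List (WithOne S × A)) :
    List (WithOne S × A) :=
  l.filterMap fun e => if IsTransitionEdge θ (t * e.1) e.2 then some (t * e.1, e.2) else none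

lemma transEdgesFrom_mul_left (t s : WithOne S) (l : List A) :
    transEdgesFrom θ (t * s) l = shiftEdges θ t (transEdgesFrom θ s l) := by
  induction l generalizing s with
  | nil => rfl
  | cons a l ih =>
    rw [transEdgesFrom_cons, transEdgesFrom_cons, shiftEdges, List.filterMap_append, mul_assoc,
      ih]
    congr 1
    by_cases ht : IsTransitionEdge θ (t * s) a
    · simp [ht, ht.of_mul_left]
    · by_cases hs : IsTransitionEdge θ s a <;> simp [ht, hs]

lemma transEdges_mul (u v : FreeMonoid A) :
    transEdges θ (u * v) = transEdges θ u ++ shiftEdges θ (θ u) (transEdges θ v) := by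
  rw [transEdges_mul_eq_append, ← mul_one (θ u), transEdgesFrom_mul_left, mul_one]
  rfl

variable {θ}

lemma transEdges_mul_isPrefix {x u : FreeMonoid A} (γ : FreeMonoid A)
    (h : transEdges θ x <+: transEdges θ u) :
    transEdges θ (γ * x) <+: transEdges θ (γ * u) := by
  rw [transEdges_mul, transEdges_mul]
  exact (List.prefix_append_right_inj _).mpr (h.filterMap _)

lemma KRrel_refl (u : FreeMonoid A) : KRrel θ u u := by
  by_cases hu : u = 1
  · exact Or.inl ⟨hu, hu⟩
  · exact Or.inr ⟨hu, hu, rfl, rfl⟩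

lemma KRrel.mul_left {u v : FreeMonoid A} (h : KRrel θ u v) (γ : FreeMonoid A) :
    KRrel θ (γ * u) (γ * v) := by
  rcases h with ⟨rfl, rfl⟩ | ⟨hu, hv, hθ, hT⟩
  · exact KRrel_refl _
  · refine Or.inr ⟨fun h => hu (mul_eq_one'.mp h).2, fun h => hv (mul_eq_one'.mp h).2, ?_, ?_⟩
    · rw [map_mul, map_mul, hθ]
    · rw [transEdges_mul, transEdges_mul, hT]

end LeftTranslation

section CommonPrefix

variable {θ : FreeMonoid A →* WithOne S}

lemma bddAbove_xi_set (u v : FreeMonoid A) :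
    BddAbove {i | i ≤ (transEdges θ u).length ∧
      (transEdges θ u).take i = (transEdges θ v).take i} :=
  ⟨_, fun _ hi => hi.1⟩

lemma xi_mem (u v : FreeMonoid A) :
    xi θ u v ≤ (transEdges θ u).length ∧
      (transEdges θ u).take (xi θ u v) = (transEdges θ v).take (xi θ u v) :=
  Nat.sSup_mem ⟨0, by simp⟩ (bddAbove_xi_set u v)

lemma length_le_xi {u v : FreeMonoid A} {l : List (WithOne S × A)}
    (hu : l <+: transEdges θ u) (hv : l <+: transEdges θ v) : l.length ≤ xi θ u v :=
  le_csSup (bddAbove_xi_set u v)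
    ⟨hu.length_le, by rw [← List.prefix_iff_eq_take.mp hu, ← List.prefix_iff_eq_take.mp hv]⟩

lemma getElem?_eq_of_lt_xi {u v : FreeMonoid A} {i : ℕ} (hi : i < xi θ u v) :
    (transEdges θ u)[i]? = (transEdges θ v)[i]? := by
  rw [← List.getElem?_take_of_lt hi, (xi_mem u v).2, List.getElem?_take_of_lt hi]

lemma exists_getElem?_xi_sub_one {u v : FreeMonoid A} (hk : 0 < xi θ u v) :
    ∃ e, (transEdges θ u)[xi θ u v - 1]? = some e :=
  ⟨_, List.getElem?_eq_getElem (by have := (xi_mem (θ := θ) u v).1; omega)⟩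

end CommonPrefix

section LengthFunction

variable {θ : FreeMonoid A →* WithOne S}

variable (θ) in
/-- In the paper's numbering the edges at list index `k` are `E_{k+1}` and `E'_{k+1}`. -/
def NextEdgesMeet (u v : FreeMonoid A) (k : ℕ) : Prop :=
  ∃ e e', (transEdges θ u)[k]? = some e ∧ (transEdges θ v)[k]? = some e' ∧
    edgeEnd θ e = edgeEnd θ e'

lemma lcD_of_KRrel {u v : FreeMonoid A} (h : KRrel θ u v) : lcD θ u v = ell S := by
  rw [lcD, if_pos h]

lemma lcD_of_xi_eq_zero {u v : FreeMonoid A} (h : ¬ KRrel θ u v) (hk : xi θ u v = 0) :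
    lcD θ u v = 0 := by
  simp [lcD, h, hk]

lemma lcD_of_getElem? {u v : FreeMonoid A} {e : WithOne S × A} (h : ¬ KRrel θ u v)
    (hk : 0 < xi θ u v) (he : (transEdges θ u)[xi θ u v - 1]? = some e) :
    lcD θ u v = if NextEdgesMeet θ u v (xi θ u v) then 2 * height (edgeEnd θ e)
      else 2 * height (edgeEnd θ e) - 1 := by
  simp only [lcD, if_neg h, if_neg hk.ne', he]
  rfl

lemma two_mul_height_le_ell [Finite S] (s : WithOne S) : 2 * height s ≤ ell S := by
  have hbdd : BddAbove (Set.range fun s : WithOne S => height s) :=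
    ⟨Nat.card (WithOne S), by rintro _ ⟨x, rfl⟩; exact (height_lt_natCard x).le⟩
  have : height s ≤ _ := le_csSup hbdd ⟨s, rfl⟩
  rw [ell]
  omega

lemma lcD_le_ell [Finite S] (u v : FreeMonoid A) : lcD θ u v ≤ ell S := by
  by_cases h : KRrel θ u v
  · rw [lcD_of_KRrel h]
  rcases Nat.eq_zero_or_pos (xi θ u v) with hk | hk
  · rw [lcD_of_xi_eq_zero h hk]
    exact Nat.zero_le _
  obtain ⟨e, he⟩ := exists_getElem?_xi_sub_one hk
  have := two_mul_height_le_ell (edgeEnd θ e)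
  rw [lcD_of_getElem? h hk he]
  split_ifs <;> omega

end LengthFunction

section LeftMultiplication

variable {θ : FreeMonoid A →* WithOne S}

lemma surjective_of_forall_exists_eq
    (hgen : ∀ s : S, ∃ u : FreeMonoid A, θ u = (s : WithOne S)) : Function.Surjective θ :=
  fun z => WithOne.cases_on z ⟨1, map_one θ⟩ hgen

lemma ltJ_edgeEnd [Finite S] (hθ : Function.Surjective θ) {e : WithOne S × A}
    (he : IsTransitionEdge θ e.1 e.2) : ltJ (edgeEnd θ e) e.1 := by
  refine ⟨(leR_mul_right _ _).leJ, fun hJ => he ?_⟩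
  obtain ⟨z, hz⟩ := leR_of_leJ_mul hJ
  obtain ⟨w, rfl⟩ := hθ z
  exact ⟨w, hz.symm⟩

lemma transEdges_ne_nil (hproper : ∀ u : FreeMonoid A, θ u = 1 → u = 1) {u : FreeMonoid A}
    (hu : u ≠ 1) : transEdges θ u ≠ [] := by
  induction u using FreeMonoid.casesOn with
  | one => exact absurd rfl hu
  | of_mul a u =>
    have ha : IsTransitionEdge θ 1 a := fun ⟨w, hw⟩ =>
      FreeMonoid.of_ne_one a (mul_eq_one'.mp (hproper _ (by simpa using hw))).1
    simp [transEdges, transEdgesFrom_cons, ha]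

lemma getElem?_transEdges_length {x : FreeMonoid A} {a : A}
    (ha : IsTransitionEdge θ (θ x) a) (y : FreeMonoid A) :
    (transEdges θ (x * FreeMonoid.of a * y))[(transEdges θ x).length]? = some (θ x, a) := by
  rw [transEdges_mul_eq_append, List.getElem?_append_left (by simp [transEdges_mul_of, ha]),
    transEdges_mul_of, if_pos ha]
  simp

lemma exists_leR_edgeEnd_xi_mul_left (hproper : ∀ u : FreeMonoid A, θ u = 1 → u = 1)
    {α β : FreeMonoid A} (γ : FreeMonoid A) {E : WithOne S × A} (hk : 0 < xi θ α β)
    (hE : (transEdges θ α)[xi θ α β - 1]? = some E) :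
    0 < xi θ (γ * α) (γ * β) ∧ ∃ E'',
      (transEdges θ (γ * α))[xi θ (γ * α) (γ * β) - 1]? = some E'' ∧
        leR (edgeEnd θ E'') (θ γ * edgeEnd θ E) := by
  obtain ⟨p, y, rfl, hθp, hTp⟩ := exists_eq_mul_edgeEnd_of_getElem?_transEdges hE
  rw [Nat.sub_add_cancel hk] at hTp
  have hTpβ : transEdges θ p <+: transEdges θ β := by
    rw [hTp, (xi_mem _ _).2]
    exact List.take_prefix _ _
  have hlen := length_le_xi (transEdges_mul_isPrefix γ (hTp ▸ List.take_prefix _ _))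
    (transEdges_mul_isPrefix γ hTpβ)
  have hp : p ≠ 1 := by
    rintro rfl
    have := congrArg List.length hTp
    simp only [transEdges_one, List.length_nil, List.length_take] at this
    have := (xi_mem (θ := θ) (1 * y) β).1
    omega
  have hpos : 0 < (transEdges θ (γ * p)).length :=
    List.length_pos_iff.mpr (transEdges_ne_nil hproper fun h => hp (mul_eq_one'.mp h).2)
  have hk' : 0 < xi θ (γ * (p * y)) (γ * β) := by omega
  obtain ⟨E'', hE''⟩ := exists_getElem?_xi_sub_one hk'
  refine ⟨hk', E'', hE'', ?_⟩
  have := leR_edgeEnd_of_length_le (θ := θ) (p := γ * p) (y := y)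
    (i := xi θ (γ * (p * y)) (γ * β) - 1) (by omega) (by rwa [mul_assoc])
  rwa [map_mul, hθp] at this

lemma height_edgeEnd_lt_of_lt [Finite S] (hθ : Function.Surjective θ) {u : FreeMonoid A}
    {i j : ℕ} {E e : WithOne S × A} (hij : i < j) (hE : (transEdges θ u)[i]? = some E)
    (he : (transEdges θ u)[j]? = some e) : height (edgeEnd θ E) < height (edgeEnd θ e) := by
  obtain ⟨x, y, -, hθx, hTx⟩ := exists_eq_mul_of_getElem?_transEdges he
  have hEx : E ∈ transEdges θ x :=
    List.mem_of_getElem? (by rw [hTx, List.getElem?_take_of_lt hij]; exact hE)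
  have hxE : leR (θ x) (edgeEnd θ E) := by
    simpa [transEdges] using leR_edgeEnd_of_mem_transEdgesFrom hEx
  have het := (mem_transEdgesFrom (List.mem_of_getElem? he)).2
  exact height_lt_of_ltJ (ltJ_of_ltJ_of_leJ (ltJ_edgeEnd hθ het) (hθx ▸ hxE.leJ))

lemma height_map_le_height_edgeEnd [Finite S] {p y : FreeMonoid A} {i : ℕ}
    {e : WithOne S × A} (γ : FreeMonoid A) (hi : (transEdges θ (γ * p)).length ≤ i + 1)
    (he : (transEdges θ (γ * (p * y)))[i]? = some e) :
    height (θ p) ≤ height (edgeEnd θ e) := by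
  have hR := leR_edgeEnd_of_length_le hi (by rwa [mul_assoc])
  rw [map_mul] at hR
  exact height_le_of_leJ (leJ_trans hR.leJ (leJ_mul_left _ _))

lemma nextEdgesMeet_or_height_lt [Finite S] (hθ : Function.Surjective θ) {α β : FreeMonoid A}
    (γ : FreeMonoid A) {E E'' : WithOne S × A} (hk : 0 < xi θ α β)
    (hE : (transEdges θ α)[xi θ α β - 1]? = some E) (hk' : 0 < xi θ (γ * α) (γ * β))
    (hE'' : (transEdges θ (γ * α))[xi θ (γ * α) (γ * β) - 1]? = some E'')
    (hmeet : NextEdgesMeet θ α β (xi θ α β)) :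
    NextEdgesMeet θ (γ * α) (γ * β) (xi θ (γ * α) (γ * β)) ∨
      height (edgeEnd θ E) < height (edgeEnd θ E'') := by
  obtain ⟨e, e', he, he', hend⟩ := hmeet
  have hlt := height_edgeEnd_lt_of_lt hθ (by omega) hE he
  obtain ⟨x, y, rfl, hθx, hTx⟩ := exists_eq_mul_of_getElem?_transEdges he
  obtain ⟨x', y', rfl, hθx', hTx'⟩ := exists_eq_mul_of_getElem?_transEdges he'
  set ξ := xi θ (γ * (x * FreeMonoid.of e.2 * y)) (γ * (x' * FreeMonoid.of e'.2 * y'))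
  have hγx : transEdges θ (γ * x') = transEdges θ (γ * x) := by
    rw [transEdges_mul, transEdges_mul, hTx, hTx', (xi_mem _ _).2]
  have hN : (transEdges θ (γ * x)).length ≤ ξ := length_le_xi
    (transEdges_mul_isPrefix γ (hTx ▸ List.take_prefix _ _))
    (hγx ▸ transEdges_mul_isPrefix γ (hTx' ▸ List.take_prefix _ _))
  have hθe : θ (x * FreeMonoid.of e.2) = edgeEnd θ e := by rw [map_mul, hθx]; rfl
  have hθe' : θ (x' * FreeMonoid.of e'.2) = edgeEnd θ e := by rw [map_mul, hθx', hend]; rfl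
  rcases le_or_gt (transEdges θ (γ * (x * FreeMonoid.of e.2))).length ξ with hα | hα
  · right
    exact hlt.trans_le (hθe ▸ height_map_le_height_edgeEnd γ (by omega) hE'')
  rcases le_or_gt (transEdges θ (γ * (x' * FreeMonoid.of e'.2))).length ξ with hβ | hβ
  · right
    rw [getElem?_eq_of_lt_xi (show ξ - 1 < ξ by omega)] at hE''
    exact hlt.trans_le (hθe' ▸ height_map_le_height_edgeEnd γ (by omega) hE'')
  left
  rw [← mul_assoc, length_transEdges_mul_of] at hα hβ
  have ht : IsTransitionEdge θ (θ (γ * x)) e.2 := by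
    by_contra h
    rw [if_neg h] at hα
    omega
  have ht' : IsTransitionEdge θ (θ (γ * x')) e'.2 := by
    by_contra h
    rw [if_neg h, hγx] at hβ
    omega
  have hξ : ξ = (transEdges θ (γ * x)).length := by
    rw [if_pos ht] at hα
    omega
  refine ⟨(θ (γ * x), e.2), (θ (γ * x'), e'.2), ?_, ?_, ?_⟩
  · rw [hξ]
    simpa only [mul_assoc] using getElem?_transEdges_length ht y
  · rw [hξ, ← hγx]
    simpa only [mul_assoc] using getElem?_transEdges_length ht' y'
  · change θ (γ * x) * θ (FreeMonoid.of e.2) = θ (γ * x') * θ (FreeMonoid.of e'.2)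
    simp only [← map_mul, mul_assoc]
    rw [map_mul, hθe, map_mul, hθe']

end LeftMultiplication

end KRHolonomy

open KRHolonomy in
theorem lcD_mul_left_ge_general {A S : Type*} [Semigroup S] [Finite S]
    (θ : FreeMonoid A →* WithOne S)
    (hgen : ∀ s : S, ∃ u : FreeMonoid A, θ u = (s : WithOne S))
    (hproper : ∀ u : FreeMonoid A, θ u = 1 → u = 1)
    (α β γ : FreeMonoid A) :
    lcD θ (γ * α) (γ * β) ≥ lcD θ α β := by
  by_cases hαβ : KRrel θ α β
  · rw [lcD_of_KRrel hαβ, lcD_of_KRrel (hαβ.mul_left γ)]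
  by_cases hγαβ : KRrel θ (γ * α) (γ * β)
  · rw [lcD_of_KRrel hγαβ]
    exact lcD_le_ell α β
  rcases Nat.eq_zero_or_pos (xi θ α β) with hk | hk
  · rw [lcD_of_xi_eq_zero hαβ hk]
    exact Nat.zero_le _
  obtain ⟨E, hE⟩ := exists_getElem?_xi_sub_one hk
  obtain ⟨hk', E'', hE'', hEE''⟩ := exists_leR_edgeEnd_xi_mul_left hproper γ hk hE
  have hle : height (edgeEnd θ E) ≤ height (edgeEnd θ E'') :=
    height_le_of_leJ (leJ_trans hEE''.leJ (leJ_mul_left _ _))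
  rw [lcD_of_getElem? hαβ hk hE, lcD_of_getElem? hγαβ hk' hE'']
  by_cases hmeet : NextEdgesMeet θ α β (xi θ α β)
  · rcases nextEdgesMeet_or_height_lt (surjective_of_forall_exists_eq hgen) γ hk hE hk' hE''
      hmeet with hmeet' | hlt
    · rw [if_pos hmeet, if_pos hmeet']
      omega
    · split_ifs <;> omega
  · rw [if_neg hmeet]
    split_ifs <;> omega

open KRHolonomy in
/-- For all `α, β, γ ∈ T¹ = KR_right(S,A)¹`, `D(γα, γβ) ≥ D(α, β)`. -/
theorem lcD_mul_left_ge {A S : Type*} [Finite A] [Semigroup S] [Finite S]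
    (θ : FreeMonoid A →* WithOne S)
    (hgen : ∀ s : S, ∃ u : FreeMonoid A, θ u = (s : WithOne S))
    (hproper : ∀ u : FreeMonoid A, θ u = 1 → u = 1)
    (α β γ : FreeMonoid A) :
    lcD θ (γ * α) (γ * β) ≥ lcD θ α β :=
  lcD_mul_left_ge_general θ hgen hproper α β γ
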